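/- Let Z be a multiaffine real polynomial in y_1,...,y_m and let e,f,g be distinct indices. Then the discriminant B² − 4AC of ΔZ{e,f} = A y_g² + B y_g + C with respect to y_g is symmetric under all permutations of the set {e,f,g}; that is, it equals the discriminant of ΔZ{e,g} with respect to y_f and the discriminant of ΔZ{f,g} with respect to y_e. -/
import Mathlib


open MvPolynomial

/-- The deletion `Z^e`: the polynomial `Z` with `y_e` set to `0`. -/
noncomputable def del {m : ℕ} (e : Fin m) (Z : MvPolynomial (Fin m) ℝ) : MvPolynomial (Fin m) ℝ :=
  aeval (fun i => if i = e then (0 : MvPolynomial (Fin m) ℝ) else X i) Z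

/-- Multiaffine: every variable occurs to at most the first power. -/
def Multiaffine {m : ℕ} (Z : MvPolynomial (Fin m) ℝ) : Prop :=
  ∀ e : Fin m, Z.degreeOf e ≤ 1

/-- The Rayleigh difference `ΔZ{e,f} = Z_e Z_f - Z_{ef} Z`. -/
noncomputable def Ray {m : ℕ} (e f : Fin m) (Z : MvPolynomial (Fin m) ℝ) : MvPolynomial (Fin m) ℝ :=
  pderiv e Z * pderiv f Z - pderiv f (pderiv e Z) * Z


/-- The discriminant `B² - 4AC` of `ΔZ{e,f}` regarded as a quadratic in `y_g`
(for `Z` multiaffine), where `A = ΔZ_g{e,f}`, `C = ΔZ^g{e,f}` and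
`B = Z_e^{fg} Z_{fg}^e + Z_f^{eg} Z_{eg}^f - Z_g^{ef} Z_{ef}^g - Z_{efg} Z^{efg}`. -/
noncomputable def disc {m : ℕ} (Z : MvPolynomial (Fin m) ℝ) (e f g : Fin m) :
    MvPolynomial (Fin m) ℝ :=
  (del f (del g (pderiv e Z)) * del e (pderiv f (pderiv g Z))
    + del e (del g (pderiv f Z)) * del f (pderiv e (pderiv g Z))
    - del e (del f (pderiv g Z)) * del g (pderiv e (pderiv f Z))
    - pderiv e (pderiv f (pderiv g Z)) * del e (del f (del g Z))) ^ 2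
  - 4 * Ray e f (pderiv g Z) * Ray e f (del g Z)

namespace DiscAux

variable {m : ℕ}

lemma del_monomial (e : Fin m) (d : Fin m →₀ ℕ) (c : ℝ) :
    del e (monomial d c) = if d e = 0 then monomial d c else 0 := by
  classical
  rw [del, aeval_monomial]
  by_cases h : d e = 0
  · rw [if_pos h, monomial_eq, algebraMap_eq]
    congr 1
    refine Finsupp.prod_congr fun i hi => ?_
    have hie : i ≠ e := by
      intro he; exact (Finsupp.mem_support_iff.mp hi) (he ▸ h)
    rw [if_neg hie]
  · rw [if_neg h]
    have he : e ∈ d.support := Finsupp.mem_support_iff.mpr h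
    rw [Finsupp.prod, Finset.prod_eq_zero he, mul_zero]
    rw [if_pos rfl]
    exact zero_pow h

lemma del_add (e : Fin m) (P Q : MvPolynomial (Fin m) ℝ) :
    del e (P + Q) = del e P + del e Q := by simp [del]

lemma del_mul (e : Fin m) (P Q : MvPolynomial (Fin m) ℝ) :
    del e (P * Q) = del e P * del e Q := by simp [del]

lemma del_X_self (e : Fin m) : del e (X e) = 0 := by simp [del]

lemma del_X_of_ne {i e : Fin m} (h : i ≠ e) : del e (X i) = X i := by simp [del, h]

lemma del_rep (e : Fin m) (P : MvPolynomial (Fin m) ℝ) :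
    del e P = ∑ d ∈ P.support, if d e = 0 then monomial d (coeff d P) else 0 := by
  rw [del]
  conv_lhs => rw [P.as_sum]
  rw [map_sum]
  exact Finset.sum_congr rfl fun d _ => del_monomial e d (coeff d P)

lemma pderiv_rep (e : Fin m) (P : MvPolynomial (Fin m) ℝ) :
    pderiv e P = ∑ d ∈ P.support,
      monomial (d - Finsupp.single e 1) (coeff d P * (d e : ℝ)) := by
  conv_lhs => rw [P.as_sum]
  rw [map_sum]
  exact Finset.sum_congr rfl fun d _ => pderiv_monomial

lemma mem_support_del {e : Fin m} {P : MvPolynomial (Fin m) ℝ} {mo : Fin m →₀ ℕ}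
    (h : mo ∈ (del e P).support) : mo ∈ P.support ∧ mo e = 0 := by
  classical
  rw [del_rep] at h
  obtain ⟨d, hd, hmd⟩ := Finset.mem_biUnion.mp (support_sum h)
  by_cases hde : d e = 0
  · rw [if_pos hde] at hmd
    have := support_monomial_subset hmd
    simp only [Finset.mem_singleton] at this
    subst this
    exact ⟨hd, hde⟩
  · rw [if_neg hde] at hmd
    simp at hmd

lemma mem_support_pderiv {e : Fin m} {P : MvPolynomial (Fin m) ℝ} {mo : Fin m →₀ ℕ}
    (h : mo ∈ (pderiv e P).support) :
    ∃ d ∈ P.support, d e ≠ 0 ∧ mo = d - Finsupp.single e 1 := by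
  classical
  rw [pderiv_rep] at h
  obtain ⟨d, hd, hmd⟩ := Finset.mem_biUnion.mp (support_sum h)
  by_cases hc : coeff d P * (d e : ℝ) = 0
  · rw [hc, monomial_zero] at hmd; simp at hmd
  · have hde : d e ≠ 0 := by
      intro h0; apply hc; rw [h0]; simp
    have := support_monomial_subset hmd
    simp only [Finset.mem_singleton] at this
    exact ⟨d, hd, hde, this⟩

lemma degreeOf_del_le (i e : Fin m) (P : MvPolynomial (Fin m) ℝ) :
    degreeOf i (del e P) ≤ degreeOf i P :=
  degreeOf_le_iff.mpr fun _ h => monomial_le_degreeOf i (mem_support_del h).1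

lemma degreeOf_del_self (e : Fin m) (P : MvPolynomial (Fin m) ℝ) :
    degreeOf e (del e P) = 0 :=
  Nat.le_zero.mp (degreeOf_le_iff.mpr fun _ h => le_of_eq (mem_support_del h).2)

lemma degreeOf_pderiv_le {i e : Fin m} (h : i ≠ e) (P : MvPolynomial (Fin m) ℝ) :
    degreeOf i (pderiv e P) ≤ degreeOf i P := by
  refine degreeOf_le_iff.mpr fun mo hmo => ?_
  obtain ⟨d, hd, hde, rfl⟩ := mem_support_pderiv hmo
  have heq : ((d - Finsupp.single e 1 : Fin m →₀ ℕ)) i = d i := by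
    rw [Finsupp.tsub_apply, Finsupp.single_apply, if_neg (fun he => h he.symm), Nat.sub_zero]
  rw [heq]
  exact monomial_le_degreeOf i hd

lemma degreeOf_pderiv_self {e : Fin m} {P : MvPolynomial (Fin m) ℝ}
    (h : degreeOf e P ≤ 1) : degreeOf e (pderiv e P) = 0 := by
  refine Nat.le_zero.mp (degreeOf_le_iff.mpr fun mo hmo => ?_)
  obtain ⟨d, hd, hde, rfl⟩ := mem_support_pderiv hmo
  have hd1 : d e ≤ 1 := le_trans (monomial_le_degreeOf e hd) h
  show ((d - Finsupp.single e 1 : Fin m →₀ ℕ)) e ≤ 0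
  rw [Finsupp.tsub_apply, Finsupp.single_apply, if_pos rfl]
  omega

lemma pderiv_eq_zero' {e : Fin m} {P : MvPolynomial (Fin m) ℝ}
    (h : degreeOf e P = 0) : pderiv e P = 0 := by
  apply pderiv_eq_zero_of_notMem_vars
  rw [mem_vars]
  rintro ⟨d, hd, hdi⟩
  have h1 := monomial_le_degreeOf e hd
  rw [h] at h1
  exact (Finsupp.mem_support_iff.mp hdi) (Nat.le_zero.mp h1)

lemma del_eq_self {e : Fin m} {P : MvPolynomial (Fin m) ℝ}
    (h : degreeOf e P = 0) : del e P = P := by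
  rw [del_rep]
  conv_rhs => rw [P.as_sum]
  refine Finset.sum_congr rfl fun d hd => ?_
  rw [if_pos (Nat.le_zero.mp (h ▸ monomial_le_degreeOf e hd))]

lemma decomp {e : Fin m} {P : MvPolynomial (Fin m) ℝ} (h : degreeOf e P ≤ 1) :
    P = del e P + X e * pderiv e P := by
  rw [del_rep, pderiv_rep, Finset.mul_sum, ← Finset.sum_add_distrib]
  conv_lhs => rw [P.as_sum]
  refine Finset.sum_congr rfl fun d hd => ?_
  have hd1 : d e ≤ 1 := le_trans (monomial_le_degreeOf e hd) h
  by_cases h0 : d e = 0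
  · simp [h0]
  · have h1 : d e = 1 := by omega
    rw [if_neg h0, zero_add, h1, Nat.cast_one, mul_one]
    have hle : Finsupp.single e 1 ≤ d := by
      rw [Finsupp.single_le_iff]; omega
    rw [← pow_one (X e), ← monomial_single_add, add_tsub_cancel_of_le hle]

end DiscAux
namespace DiscAux2

open DiscAux

/-- `t` does not involve the variables `e`, `f`, `g`. -/
def Indep3 {m : ℕ} (e f g : Fin m) (t : MvPolynomial (Fin m) ℝ) : Prop :=
  pderiv e t = 0 ∧ pderiv f t = 0 ∧ pderiv g t = 0 ∧ del e t = t ∧ del f t = t ∧ del g t = t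

lemma disc_formula {m : ℕ} (e f g : Fin m) (hef : e ≠ f) (heg : e ≠ g) (hfg : f ≠ g)
    (a b c d p q r s W : MvPolynomial (Fin m) ℝ)
    (hW : W = a + X e * b + X f * c + X g * d + X e * X f * p + X e * X g * q
        + X f * X g * r + X e * X f * X g * s)
    (ha : Indep3 e f g a) (hb : Indep3 e f g b) (hc : Indep3 e f g c)
    (hd : Indep3 e f g d) (hp : Indep3 e f g p) (hq : Indep3 e f g q)
    (hr : Indep3 e f g r) (hs : Indep3 e f g s) :
    disc W e f g
      = (b * r + c * q - d * p - s * a) ^ 2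
        - 4 * (q * r - s * d) * (b * c - p * a) := by
  obtain ⟨ha1, ha2, ha3, ha4, ha5, ha6⟩ := ha
  obtain ⟨hb1, hb2, hb3, hb4, hb5, hb6⟩ := hb
  obtain ⟨hc1, hc2, hc3, hc4, hc5, hc6⟩ := hc
  obtain ⟨hd1, hd2, hd3, hd4, hd5, hd6⟩ := hd
  obtain ⟨hp1, hp2, hp3, hp4, hp5, hp6⟩ := hp
  obtain ⟨hq1, hq2, hq3, hq4, hq5, hq6⟩ := hq
  obtain ⟨hr1, hr2, hr3, hr4, hr5, hr6⟩ := hr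
  obtain ⟨hs1, hs2, hs3, hs4, hs5, hs6⟩ := hs
  subst hW
  simp only [disc, Ray, map_add, del_add, del_mul, pderiv_mul,
    pderiv_X_self, pderiv_X_of_ne hef, pderiv_X_of_ne hef.symm,
    pderiv_X_of_ne heg, pderiv_X_of_ne heg.symm,
    pderiv_X_of_ne hfg, pderiv_X_of_ne hfg.symm,
    del_X_self, del_X_of_ne hef, del_X_of_ne hef.symm,
    del_X_of_ne heg, del_X_of_ne heg.symm,
    del_X_of_ne hfg, del_X_of_ne hfg.symm,
    ha1, ha2, ha3, ha4, ha5, ha6, hb1, hb2, hb3, hb4, hb5, hb6,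
    hc1, hc2, hc3, hc4, hc5, hc6, hd1, hd2, hd3, hd4, hd5, hd6,
    hp1, hp2, hp3, hp4, hp5, hp6, hq1, hq2, hq3, hq4, hq5, hq6,
    hr1, hr2, hr3, hr4, hr5, hr6, hs1, hs2, hs3, hs4, hs5, hs6,
    mul_zero, zero_mul, mul_one, one_mul, add_zero, zero_add,
    map_zero, map_one]
  ring


lemma Indep3.swap23 {m : ℕ} {e f g : Fin m} {t : MvPolynomial (Fin m) ℝ}
    (h : Indep3 e f g t) : Indep3 e g f t := by
  obtain ⟨h1, h2, h3, h4, h5, h6⟩ := h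
  exact ⟨h1, h3, h2, h4, h6, h5⟩

lemma Indep3.rot {m : ℕ} {e f g : Fin m} {t : MvPolynomial (Fin m) ℝ}
    (h : Indep3 e f g t) : Indep3 f g e t := by
  obtain ⟨h1, h2, h3, h4, h5, h6⟩ := h
  exact ⟨h2, h3, h1, h5, h6, h4⟩

lemma indep3_of {m : ℕ} {e f g : Fin m} {t : MvPolynomial (Fin m) ℝ}
    (he : degreeOf e t = 0) (hf : degreeOf f t = 0) (hg : degreeOf g t = 0) :
    Indep3 e f g t :=
  ⟨pderiv_eq_zero' he, pderiv_eq_zero' hf, pderiv_eq_zero' hg,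
    del_eq_self he, del_eq_self hf, del_eq_self hg⟩

lemma key_lemma {m : ℕ} (Z : MvPolynomial (Fin m) ℝ) (e f g : Fin m)
    (hef : e ≠ f) (heg : e ≠ g) (hfg : f ≠ g)
    (A B Cc D Pp Q Rr S : MvPolynomial (Fin m) ℝ)
    (hA : Indep3 e f g A) (hB : Indep3 e f g B) (hC : Indep3 e f g Cc)
    (hD : Indep3 e f g D) (hP : Indep3 e f g Pp) (hQ : Indep3 e f g Q)
    (hR : Indep3 e f g Rr) (hS : Indep3 e f g S)
    (hW : Z = A + X e * B + X f * Cc + X g * D + X e * X f * Pp + X e * X g * Q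
        + X f * X g * Rr + X e * X f * X g * S) :
    disc Z e f g = disc Z e g f ∧ disc Z e f g = disc Z f g e := by
  have hW2 : Z = A + X e * B + X g * D + X f * Cc + X e * X g * Q + X e * X f * Pp
      + X g * X f * Rr + X e * X g * X f * S := by rw [hW]; ring
  have hW3 : Z = A + X f * Cc + X g * D + X e * B + X f * X g * Rr + X f * X e * Pp
      + X g * X e * Q + X f * X g * X e * S := by rw [hW]; ring
  have h1 := disc_formula e f g hef heg hfg A B Cc D Pp Q Rr S Z hW
    hA hB hC hD hP hQ hR hS
  have h2 := disc_formula e g f heg hef hfg.symm A B D Cc Q Pp Rr S Z hW2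
    hA.swap23 hB.swap23 hD.swap23 hC.swap23 hQ.swap23 hP.swap23 hR.swap23 hS.swap23
  have h3 := disc_formula f g e hfg hef.symm heg.symm A Cc D B Rr Pp Q S Z hW3
    hA.rot hC.rot hD.rot hB.rot hR.rot hP.rot hQ.rot hS.rot
  constructor
  · rw [h1, h2]; ring
  · rw [h1, h3]; ring

end DiscAux2

open DiscAux DiscAux2

theorem discriminant_symmetric {m : ℕ} (Z : MvPolynomial (Fin m) ℝ)
    (hZ : Multiaffine Z) (e f g : Fin m)
    (hef : e ≠ f) (heg : e ≠ g) (hfg : f ≠ g) :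
    disc Z e f g = disc Z e g f ∧ disc Z e f g = disc Z f g e := by
  -- level-1 degree facts
  have hg_t0 : degreeOf g (del g Z) = 0 := degreeOf_del_self g Z
  have hg_t1 : degreeOf g (pderiv g Z) = 0 := degreeOf_pderiv_self (hZ g)
  have he_t0 : degreeOf e (del g Z) ≤ 1 := le_trans (degreeOf_del_le e g Z) (hZ e)
  have he_t1 : degreeOf e (pderiv g Z) ≤ 1 := le_trans (degreeOf_pderiv_le heg Z) (hZ e)
  have hf_t0 : degreeOf f (del g Z) ≤ 1 := le_trans (degreeOf_del_le f g Z) (hZ f)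
  have hf_t1 : degreeOf f (pderiv g Z) ≤ 1 := le_trans (degreeOf_pderiv_le hfg Z) (hZ f)
  -- level-2 degree facts
  have hf_T00 : degreeOf f (del f (del g Z)) = 0 := degreeOf_del_self f _
  have hf_T01 : degreeOf f (pderiv f (del g Z)) = 0 := degreeOf_pderiv_self hf_t0
  have hf_T10 : degreeOf f (del f (pderiv g Z)) = 0 := degreeOf_del_self f _
  have hf_T11 : degreeOf f (pderiv f (pderiv g Z)) = 0 := degreeOf_pderiv_self hf_t1
  have hg_T00 : degreeOf g (del f (del g Z)) = 0 :=
    Nat.le_zero.mp (le_trans (degreeOf_del_le g f _) (le_of_eq hg_t0))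
  have hg_T01 : degreeOf g (pderiv f (del g Z)) = 0 :=
    Nat.le_zero.mp (le_trans (degreeOf_pderiv_le hfg.symm _) (le_of_eq hg_t0))
  have hg_T10 : degreeOf g (del f (pderiv g Z)) = 0 :=
    Nat.le_zero.mp (le_trans (degreeOf_del_le g f _) (le_of_eq hg_t1))
  have hg_T11 : degreeOf g (pderiv f (pderiv g Z)) = 0 :=
    Nat.le_zero.mp (le_trans (degreeOf_pderiv_le hfg.symm _) (le_of_eq hg_t1))
  have he_T00 : degreeOf e (del f (del g Z)) ≤ 1 := le_trans (degreeOf_del_le e f _) he_t0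
  have he_T01 : degreeOf e (pderiv f (del g Z)) ≤ 1 := le_trans (degreeOf_pderiv_le hef _) he_t0
  have he_T10 : degreeOf e (del f (pderiv g Z)) ≤ 1 := le_trans (degreeOf_del_le e f _) he_t1
  have he_T11 : degreeOf e (pderiv f (pderiv g Z)) ≤ 1 := le_trans (degreeOf_pderiv_le hef _) he_t1
  -- the eight atoms and their independence
  have hA : Indep3 e f g (del e (del f (del g Z))) :=
    indep3_of (degreeOf_del_self e _)
      (Nat.le_zero.mp (le_trans (degreeOf_del_le f e _) (le_of_eq hf_T00)))
      (Nat.le_zero.mp (le_trans (degreeOf_del_le g e _) (le_of_eq hg_T00)))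
  have hB : Indep3 e f g (pderiv e (del f (del g Z))) :=
    indep3_of (degreeOf_pderiv_self he_T00)
      (Nat.le_zero.mp (le_trans (degreeOf_pderiv_le hef.symm _) (le_of_eq hf_T00)))
      (Nat.le_zero.mp (le_trans (degreeOf_pderiv_le heg.symm _) (le_of_eq hg_T00)))
  have hC : Indep3 e f g (del e (pderiv f (del g Z))) :=
    indep3_of (degreeOf_del_self e _)
      (Nat.le_zero.mp (le_trans (degreeOf_del_le f e _) (le_of_eq hf_T01)))
      (Nat.le_zero.mp (le_trans (degreeOf_del_le g e _) (le_of_eq hg_T01)))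
  have hP : Indep3 e f g (pderiv e (pderiv f (del g Z))) :=
    indep3_of (degreeOf_pderiv_self he_T01)
      (Nat.le_zero.mp (le_trans (degreeOf_pderiv_le hef.symm _) (le_of_eq hf_T01)))
      (Nat.le_zero.mp (le_trans (degreeOf_pderiv_le heg.symm _) (le_of_eq hg_T01)))
  have hD : Indep3 e f g (del e (del f (pderiv g Z))) :=
    indep3_of (degreeOf_del_self e _)
      (Nat.le_zero.mp (le_trans (degreeOf_del_le f e _) (le_of_eq hf_T10)))
      (Nat.le_zero.mp (le_trans (degreeOf_del_le g e _) (le_of_eq hg_T10)))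
  have hQ : Indep3 e f g (pderiv e (del f (pderiv g Z))) :=
    indep3_of (degreeOf_pderiv_self he_T10)
      (Nat.le_zero.mp (le_trans (degreeOf_pderiv_le hef.symm _) (le_of_eq hf_T10)))
      (Nat.le_zero.mp (le_trans (degreeOf_pderiv_le heg.symm _) (le_of_eq hg_T10)))
  have hR : Indep3 e f g (del e (pderiv f (pderiv g Z))) :=
    indep3_of (degreeOf_del_self e _)
      (Nat.le_zero.mp (le_trans (degreeOf_del_le f e _) (le_of_eq hf_T11)))
      (Nat.le_zero.mp (le_trans (degreeOf_del_le g e _) (le_of_eq hg_T11)))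
  have hS : Indep3 e f g (pderiv e (pderiv f (pderiv g Z))) :=
    indep3_of (degreeOf_pderiv_self he_T11)
      (Nat.le_zero.mp (le_trans (degreeOf_pderiv_le hef.symm _) (le_of_eq hf_T11)))
      (Nat.le_zero.mp (le_trans (degreeOf_pderiv_le heg.symm _) (le_of_eq hg_T11)))
  -- the decomposition of Z
  have hd3 : del f (del g Z)
      = del e (del f (del g Z)) + X e * pderiv e (del f (del g Z)) := decomp he_T00
  have hd4 : pderiv f (del g Z)
      = del e (pderiv f (del g Z)) + X e * pderiv e (pderiv f (del g Z)) := decomp he_T01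
  have hd5 : del f (pderiv g Z)
      = del e (del f (pderiv g Z)) + X e * pderiv e (del f (pderiv g Z)) := decomp he_T10
  have hd6 : pderiv f (pderiv g Z)
      = del e (pderiv f (pderiv g Z)) + X e * pderiv e (pderiv f (pderiv g Z)) := decomp he_T11
  have hW : Z = del e (del f (del g Z)) + X e * pderiv e (del f (del g Z))
      + X f * del e (pderiv f (del g Z)) + X g * del e (del f (pderiv g Z))
      + X e * X f * pderiv e (pderiv f (del g Z))
      + X e * X g * pderiv e (del f (pderiv g Z))
      + X f * X g * del e (pderiv f (pderiv g Z))
      + X e * X f * X g * pderiv e (pderiv f (pderiv g Z)) := by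
    calc Z = del g Z + X g * pderiv g Z := decomp (hZ g)
      _ = (del f (del g Z) + X f * pderiv f (del g Z))
          + X g * (del f (pderiv g Z) + X f * pderiv f (pderiv g Z)) := by
            rw [← decomp hf_t0, ← decomp hf_t1]
      _ = _ := by
            linear_combination hd3 + X f * hd4 + X g * hd5 + X g * (X f * hd6)
  exact key_lemma Z e f g hef heg hfg _ _ _ _ _ _ _ _ hA hB hC hD hP hQ hR hS hW
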